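/- For all natural numbers n and r with n odd, Σ_{i=0}^{r} q^{i(n+1)/2} · [(n−1)/2 + i choose i]_q · [(n−1)/2 + r − i choose r − i]_q = [n+r choose r]_q, as an identity of polynomials in q. -/
import Mathlib


open Polynomial

/-- The Gaussian binomial coefficient `[n choose k]_q` as a polynomial in `q` over `ℤ`,
defined via the `q`-Pascal recurrence; it agrees with the product formula
`∏_{i=1}^{k} (q^{n-k+i} − 1)/(q^i − 1)`. -/
noncomputable def gaussBinomial : ℕ → ℕ → Polynomial ℤ
  | _, 0 => 1
  | 0, _ + 1 => 0
  | n + 1, k + 1 => gaussBinomial n k + Polynomial.X ^ (k + 1) * gaussBinomial n (k + 1)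

lemma gb_zero (n : ℕ) : gaussBinomial n 0 = 1 := by cases n <;> rfl

lemma gb_pascal (n k : ℕ) : gaussBinomial (n+1) (k+1) =
    gaussBinomial n k + X ^ (k + 1) * gaussBinomial n (k + 1) := rfl

lemma gb_of_lt : ∀ {n k : ℕ}, n < k → gaussBinomial n k = 0 := by
  intro n
  induction n with
  | zero => intro k hk; cases k with
    | zero => omega
    | succ k => rfl
  | succ n ih =>
    intro k hk
    cases k with
    | zero => omega
    | succ k =>
      rw [gb_pascal, ih (by omega), ih (by omega)]
      ring

lemma gb_self (n : ℕ) : gaussBinomial n n = 1 := by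
  induction n with
  | zero => rfl
  | succ n ih => rw [gb_pascal, ih, gb_of_lt (by omega)]; ring

lemma hockey (a r : ℕ) :
    ∑ i ∈ Finset.range (r + 1), X ^ i * gaussBinomial (a + i) i = gaussBinomial (a + 1 + r) r := by
  induction r with
  | zero => simp [gb_zero]
  | succ r ih =>
    rw [Finset.sum_range_succ, ih]
    have : a + 1 + (r + 1) = (a + 1 + r) + 1 := by omega
    rw [this, gb_pascal]
    have : a + (r + 1) = a + 1 + r := by omega
    rw [this]

lemma key (a b r : ℕ) :
    ∑ i ∈ Finset.range (r + 1),
        X ^ (i * (b + 1)) * gaussBinomial (a + i) i * gaussBinomial (b + r - i) (r - i) =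
      gaussBinomial (a + b + 1 + r) r := by
  induction b generalizing r with
  | zero =>
    have : ∀ i ∈ Finset.range (r + 1),
        X ^ (i * (0 + 1)) * gaussBinomial (a + i) i * gaussBinomial (0 + r - i) (r - i)
          = X ^ i * gaussBinomial (a + i) i := by
      intro i hi
      simp only [Finset.mem_range] at hi
      have h1 : 0 + r - i = r - i := by omega
      rw [h1, gb_self, mul_one]; norm_num
    rw [Finset.sum_congr rfl this, hockey]
  | succ b ihb =>
    induction r with
    | zero => simp [gb_zero]
    | succ r ihr =>
      rw [Finset.sum_range_succ]
      have step : ∀ i ∈ Finset.range (r + 1),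
          X ^ (i * (b + 1 + 1)) * gaussBinomial (a + i) i *
              gaussBinomial (b + 1 + (r + 1) - i) (r + 1 - i)
            = X ^ (i * (b + 1 + 1)) * gaussBinomial (a + i) i *
                gaussBinomial (b + 1 + r - i) (r - i)
              + X ^ (r + 1) * (X ^ (i * (b + 1)) * gaussBinomial (a + i) i *
                  gaussBinomial (b + (r + 1) - i) (r + 1 - i)) := by
        intro i hi
        simp only [Finset.mem_range] at hi
        have h1 : b + 1 + (r + 1) - i = (b + 1 + r - i) + 1 := by omega
        have h2 : r + 1 - i = (r - i) + 1 := by omega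
        rw [h1, h2, gb_pascal, mul_add]
        congr 1
        have h3 : b + (r + 1) - i = b + 1 + r - i := by omega
        have h4 : r - i + 1 = r + 1 - i := by omega
        rw [h3]
        have h5 : i * (b + 1 + 1) + (r - i + 1) = r + 1 + i * (b + 1) := by
          have : i ≤ r := by omega
          cases Nat.le.dest this with
          | intro c hc => subst hc; ring_nf; omega
        calc X ^ (i * (b + 1 + 1)) * gaussBinomial (a + i) i *
              (X ^ (r - i + 1) * gaussBinomial (b + 1 + r - i) (r - i + 1))
            = X ^ (i * (b + 1 + 1) + (r - i + 1)) * gaussBinomial (a + i) i *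
                gaussBinomial (b + 1 + r - i) (r - i + 1) := by rw [pow_add]; ring
          _ = _ := by rw [h5, pow_add]; ring
      rw [Finset.sum_congr rfl step, Finset.sum_add_distrib, ihr, ← Finset.mul_sum]
      have last : X ^ ((r + 1) * (b + 1 + 1)) * gaussBinomial (a + (r + 1)) (r + 1) *
            gaussBinomial (b + 1 + (r + 1) - (r + 1)) (r + 1 - (r + 1))
          = X ^ (r + 1) * (X ^ ((r + 1) * (b + 1)) * gaussBinomial (a + (r + 1)) (r + 1) *
              gaussBinomial (b + (r + 1) - (r + 1)) (r + 1 - (r + 1))) := by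
        have h1 : r + 1 - (r + 1) = 0 := by omega
        rw [h1, gb_zero, gb_zero, mul_one, mul_one, ← mul_assoc, ← pow_add]
        congr 2
        ring
      rw [add_assoc, last, ← mul_add, ← Finset.sum_range_succ, ihb (r + 1)]
      have h6 : a + (b + 1) + 1 + (r + 1) = (a + b + 1 + (r + 1)) + 1 := by omega
      have h7 : a + (b + 1) + 1 + r = a + b + 1 + (r + 1) := by omega
      rw [h6, gb_pascal, h7]

theorem gaussBinomial_sum_median_square (n r : ℕ) (hn : Odd n) :
    ∑ i ∈ Finset.range (r + 1),
        X ^ (i * (n + 1) / 2) *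
          gaussBinomial ((n - 1) / 2 + i) i * gaussBinomial ((n - 1) / 2 + r - i) (r - i) =
      gaussBinomial (n + r) r := by
  obtain ⟨m, hm⟩ := hn
  subst hm
  have e : ∀ i ∈ Finset.range (r + 1),
      X ^ (i * (2 * m + 1 + 1) / 2) * gaussBinomial ((2 * m + 1 - 1) / 2 + i) i *
          gaussBinomial ((2 * m + 1 - 1) / 2 + r - i) (r - i)
        = X ^ (i * (m + 1)) * gaussBinomial (m + i) i * gaussBinomial (m + r - i) (r - i) := by
    intro i hi
    have h1 : i * (2 * m + 1 + 1) / 2 = i * (m + 1) := by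
      have : i * (2 * m + 1 + 1) = 2 * (i * (m + 1)) := by ring
      omega
    have h2 : (2 * m + 1 - 1) / 2 = m := by omega
    rw [h1, h2]
  rw [Finset.sum_congr rfl e, key m m r]
  congr 1
  omega
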